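/- arXiv:1907.05605 — 2 statements merged into one kernel-verified Lean document; each statement's English description precedes it below -/
import Mathlib

section
/- Let S be a nonempty finite set and let μ_1, μ_2 be probability measures on F_S. If supp(μ_1) ⊆ supp(μ_2), then k(μ_1) ≥ k(μ_2). -/
/-!
Almost every `ν₁`-i.i.d. sequence has all its maps in `supp ν₁ ⊆ supp ν₂`, so there is such a
sequence `f` with `k(f) = k₁`. Its `k_t` reaches `k₁` at some finite `T`, and the `ν₂`-i.i.d.
sequences beginning with `f_1, …, f_T` have positive probability, so one of them has `k = k₂`.
As `k_t` depends only on the first `t` maps and `k ≤ k_t`, this gives `k₂ ≤ k_T(f) = k₁`.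
-/

open MeasureTheory

namespace CFTP

variable {S : Type*}

/-- Forward composition `f_t ∘ f_{t-1} ∘ ⋯ ∘ f_1` (functions are indexed by 1,2,…). -/
def fwd (f : ℕ → S → S) : ℕ → S → S
  | 0 => id
  | t + 1 => f (t + 1) ∘ fwd f t

/-- Backward composition `f_1 ∘ f_2 ∘ ⋯ ∘ f_t`. -/
def bwd (f : ℕ → S → S) : ℕ → S → S
  | 0 => id
  | t + 1 => bwd f t ∘ f (t + 1)

/-- `k_t(f⃗)`: the number of equivalence classes of `i ~ j ↔ f⃗_t i = f⃗_t j`,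
i.e. the cardinality of the image of the forward composition. -/
noncomputable def ktF (f : ℕ → S → S) (t : ℕ) : ℕ := Set.ncard (Set.range (fwd f t))

/-- `k_t(f⃖)`: the cardinality of the image of the backward composition. -/
noncomputable def ktB (f : ℕ → S → S) (t : ℕ) : ℕ := Set.ncard (Set.range (bwd f t))

/-- `k(f⃗)`: the eventual (= minimal) value of the non-increasing sequence `k_t(f⃗)`. -/
noncomputable def kF (f : ℕ → S → S) : ℕ := ⨅ t, ktF f t

/-- `k(f⃖)`. -/
noncomputable def kB (f : ℕ → S → S) : ℕ := ⨅ t, ktB f t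

/-- `μbar` is the joint law of an i.i.d. sequence with one-step law `ν`,
i.e. the countable product measure `∏_{s ∈ ℕ} ν`, characterised by its
values on cylinder events. -/
def IsIID [MeasurableSpace S] (ν : Measure (S → S)) (μbar : Measure (ℕ → S → S)) : Prop :=
  ∀ (I : Finset ℕ) (g : ℕ → S → S),
    μbar {F | ∀ s ∈ I, F s = g s} = ∏ s ∈ I, ν {g s}

/-- The support of a probability measure on the finite set `F_S`. -/
def supp [MeasurableSpace S] (ν : Measure (S → S)) : Set (S → S) := {f | 0 < ν {f}}

/-- A stochastic matrix: nonnegative entries, row sums one. -/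
def IsStochastic [Fintype S] (P : S → S → ℝ) : Prop :=
  (∀ i j, 0 ≤ P i j) ∧ ∀ i, ∑ j, P i j = 1

/-- `ν ∈ L(P)`: the measure `ν` on `F_S` is consistent with the matrix `P`. -/
def Consistent [Fintype S] [MeasurableSpace S] (P : S → S → ℝ) (ν : Measure (S → S)) : Prop :=
  ∀ i j, ν {f : S → S | f i = j} = ENNReal.ofReal (P i j)

/-- Irreducibility: for all `i j` some power of `P` has positive `(i,j)` entry. -/
def Irred [Fintype S] [DecidableEq S] (P : S → S → ℝ) : Prop :=
  ∀ i j, ∃ t, 1 ≤ t ∧ 0 < ((Matrix.of P) ^ t) i j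

/-- Aperiodicity: for each `i`, the gcd of `{t ≥ 1 : (P^t)_{i,i} > 0}` is `1`,
expressed as: every common divisor of that set equals `1`. -/
def Aperiodic [Fintype S] [DecidableEq S] (P : S → S → ℝ) : Prop :=
  ∀ i, ∀ d : ℕ, (∀ t, 1 ≤ t → 0 < ((Matrix.of P) ^ t) i i → d ∣ t) → d = 1

/-- A function is constant. -/
def IsConst (g : S → S) : Prop := ∀ i j, g i = g j

/-- The backward coalescence time `C`. -/
noncomputable def Ctime (F : ℕ → S → S) : ℕ∞ :=
  sInf ((fun t : ℕ => (t : ℕ∞)) '' {t : ℕ | 1 ≤ t ∧ IsConst (bwd F t)})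

/-- The forward coalescence time `T`. -/
noncomputable def Ttime (F : ℕ → S → S) : ℕ∞ :=
  sInf ((fun t : ℕ => (t : ℕ∞)) '' {t : ℕ | 1 ≤ t ∧ IsConst (fwd F t)})

/-- The 0-1 matrix `M_f`. -/
noncomputable def Mmat [Fintype S] [DecidableEq S] (f : S → S) : Matrix S S ℝ :=
  Matrix.of fun i j => if f i = j then 1 else 0

/-- The product `M_{f_t} M_{f_{t-1}} ⋯ M_{f_1}`. -/
noncomputable def Mprod [Fintype S] [DecidableEq S] (f : ℕ → S → S) : ℕ → Matrix S S ℝ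
  | 0 => 1
  | t + 1 => Mmat (f (t + 1)) * Mprod f t

/-- The event that states `i` and `j` coalesce. -/
def coalEvent (i j : S) : Set (ℕ → S → S) := {F | ∃ t, 1 ≤ t ∧ fwd F t i = fwd F t j}

lemma fwd_congr {f g : ℕ → S → S} {T : ℕ} (h : ∀ s ∈ Finset.Icc 1 T, f s = g s) :
    fwd f T = fwd g T := by
  induction T with
  | zero => rfl
  | succ T ih =>
    rw [fwd, fwd, ih fun s hs => h s (Finset.Icc_subset_Icc_right T.le_succ hs),
      h (T + 1) (Finset.mem_Icc.2 ⟨T.succ_pos, le_rfl⟩)]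

lemma kF_le_ktF (f : ℕ → S → S) (t : ℕ) : kF f ≤ ktF f t :=
  ciInf_le (OrderBot.bddBelow _) t

lemma exists_ktF_eq_kF (f : ℕ → S → S) : ∃ T, ktF f T = kF f :=
  Nat.sInf_mem (Set.range_nonempty (ktF f))

section IID

variable [MeasurableSpace S] {ν : Measure (S → S)} {μbar : Measure (ℕ → S → S)}

lemma IsIID.measure_coord_eq (h : IsIID ν μbar) (s : ℕ) (g : S → S) :
    μbar {F | F s = g} = ν {g} := by
  simpa using h {s} fun _ => g

lemma IsIID.measure_cylinder_pos (h : IsIID ν μbar) {I : Finset ℕ} {g : ℕ → S → S}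
    (hg : ∀ s ∈ I, g s ∈ supp ν) : 0 < μbar {F | ∀ s ∈ I, F s = g s} := by
  rw [h I g, pos_iff_ne_zero, Finset.prod_ne_zero_iff]
  exact fun s hs => (hg s hs).ne'

lemma IsIID.ae_mem_supp [Finite S] (h : IsIID ν μbar) : ∀ᵐ F ∂μbar, ∀ s, F s ∈ supp ν := by
  refine ae_all_iff.2 fun s => ?_
  have hbad : {F : ℕ → S → S | F s ∉ supp ν} = ⋃ g ∈ (supp ν)ᶜ, {F | F s = g} := by
    ext F; simp
  rw [ae_iff, hbad, measure_biUnion_null_iff (Set.to_countable _)]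
  intro g hg
  rw [h.measure_coord_eq]
  simpa [supp] using hg

lemma IsIID.exists_kF_eq_of_measure_ne_zero [Finite S] (h : IsIID ν μbar) {k : ℕ}
    (hk : μbar {F | kF F = k} ≠ 0) : ∃ f, kF f = k ∧ ∀ s, f s ∈ supp ν :=
  Measure.exists_mem_of_measure_ne_zero_of_ae hk (ae_restrict_of_ae h.ae_mem_supp)

lemma IsIID.le_kF_of_forall_mem_supp [Countable S] [MeasurableSingletonClass S]
    [IsProbabilityMeasure μbar] (h : IsIID ν μbar) {k : ℕ} (hk : μbar {F | kF F = k} = 1)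
    {f : ℕ → S → S} (hf : ∀ s, f s ∈ supp ν) : k ≤ kF f := by
  obtain ⟨T, hT⟩ := exists_ktF_eq_kF f
  set C : Set (ℕ → S → S) := {F | ∀ s ∈ Finset.Icc 1 T, F s = f s}
  have hC : MeasurableSet C := by
    simp only [C, Set.ofPred_forall]
    exact .biInter (Finset.Icc 1 T).countable_toSet fun s _ =>
      measurableSet_singleton (f s) |>.preimage (measurable_pi_apply s)
  have hCpos : 0 < μbar C := h.measure_cylinder_pos fun s _ => hf s
  obtain ⟨G, hGk, hGC⟩ : ({F | kF F = k} ∩ C).Nonempty := by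
    refine nonempty_inter_of_measure_lt_add μbar hC (Set.subset_univ _) (Set.subset_univ _) ?_
    rw [measure_univ, hk]
    exact ENNReal.lt_add_right ENNReal.one_ne_top hCpos.ne'
  calc k = kF G := hGk.symm
    _ ≤ ktF G T := kF_le_ktF G T
    _ = ktF f T := by rw [ktF, ktF, fwd_congr hGC]
    _ = kF f := hT

end IID

theorem stmt4_general [Fintype S] [MeasurableSpace S] [DiscreteMeasurableSpace S]
    (ν₁ ν₂ : Measure (S → S))
    (μbar₁ μbar₂ : Measure (ℕ → S → S))
    [IsProbabilityMeasure μbar₂]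
    (h₁ : IsIID ν₁ μbar₁) (h₂ : IsIID ν₂ μbar₂)
    (k₁ k₂ : ℕ)
    (hk₁ : μbar₁ {F | kF F = k₁} = 1) (hk₂ : μbar₂ {F | kF F = k₂} = 1)
    (hsupp : supp ν₁ ⊆ supp ν₂) :
    k₂ ≤ k₁ := by
  obtain ⟨f, rfl, hf⟩ := h₁.exists_kF_eq_of_measure_ne_zero (k := k₁) (by simp [hk₁])
  exact h₂.le_kF_of_forall_mem_supp hk₂ fun s => hsupp (hf s)

theorem stmt4 [Fintype S] [Nonempty S] [MeasurableSpace S] [DiscreteMeasurableSpace S]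
    (ν₁ ν₂ : Measure (S → S)) [IsProbabilityMeasure ν₁] [IsProbabilityMeasure ν₂]
    (μbar₁ μbar₂ : Measure (ℕ → S → S))
    [IsProbabilityMeasure μbar₁] [IsProbabilityMeasure μbar₂]
    (h₁ : IsIID ν₁ μbar₁) (h₂ : IsIID ν₂ μbar₂)
    (k₁ k₂ : ℕ)
    (hk₁ : μbar₁ {F | kF F = k₁} = 1) (hk₂ : μbar₂ {F | kF F = k₂} = 1)
    (hsupp : supp ν₁ ⊆ supp ν₂) :
    k₂ ≤ k₁ :=
  stmt4_general ν₁ ν₂ μbar₁ μbar₂ h₁ h₂ k₁ k₂ hk₁ hk₂ hsupp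

end CFTP
end

section
/- Let S be a finite set with |S| = n ≥ 2 and let P be an irreducible stochastic matrix on S. Then n ∈ K(P) if and only if P is doubly stochastic; that is, there exists a probability measure μ consistent with P having coalescence number k(μ) = n if and only if all column sums of P equal 1. -/
/-!
If `k = n` almost surely, then almost surely no two states ever merge, so the first map `F 1` is
a.s. a permutation. Then `ν` is carried by permutations, and summing `ν {f | f i = j}` over `i`
counts the preimages of `j`, which is one a.s.; hence the columns of `P` sum to one. Conversely,
Birkhoff's theorem writes a doubly stochastic `P` as a convex combination `∑ w σ • σ` of permutation
matrices. The mixture `∑ w σ • δ_σ` is consistent with `P`, and under its i.i.d. product every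
forward composition is almost surely a permutation, so `k = n` almost surely.
-/

open MeasureTheory

namespace CFTP

variable {S : Type*}

section Coalescence

lemma bijective_fwd {f : ℕ → S → S} (hf : ∀ s, (f s).Bijective) (t : ℕ) :
    (fwd f t).Bijective := by
  induction t with
  | zero => exact Function.bijective_id
  | succ t ih => exact (hf (t + 1)).comp ih

lemma kF_eq_card_of_bijective [Finite S] {f : ℕ → S → S} (hf : ∀ s, (f s).Bijective) :
    kF f = Nat.card S := by
  simp [kF, ktF, (bijective_fwd hf _).surjective.range_eq, Set.ncard_univ]

lemma surjective_fwd_of_kF_eq_card [Finite S] {f : ℕ → S → S} (h : kF f = Nat.card S)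
    (t : ℕ) : (fwd f t).Surjective := by
  rw [← Set.range_eq_univ]
  by_contra hne
  have hle : kF f ≤ ktF f t := ciInf_le (OrderBot.bddBelow _) t
  exact (Set.ncard_lt_card hne).not_ge (h ▸ hle)

end Coalescence

section Measures

variable [MeasurableSpace S] [DiscreteMeasurableSpace S]

lemma IsIID.map_eval [Finite S] {ν : Measure (S → S)} {μbar : Measure (ℕ → S → S)}
    (h : IsIID ν μbar) (s : ℕ) : μbar.map (fun F ↦ F s) = ν := by
  refine Measure.ext_iff_singleton.2 fun f ↦ ?_
  rw [Measure.map_apply (measurable_pi_apply s) (measurableSet_singleton f)]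
  simpa [Set.preimage] using h {s} fun _ ↦ f

lemma isIID_infinitePi [Countable S] (ν : Measure (S → S)) [IsProbabilityMeasure ν] :
    IsIID ν (Measure.infinitePi fun _ : ℕ ↦ ν) := by
  intro I g
  have hpi : {F : ℕ → S → S | ∀ s ∈ I, F s = g s} = Set.pi I fun s ↦ {g s} := by
    ext F; simp
  rw [hpi, Measure.infinitePi_pi _ fun s _ ↦ measurableSet_singleton (g s)]

lemma ae_surjective_of_measure_kF_eq_card [Finite S] {ν : Measure (S → S)}
    {μbar : Measure (ℕ → S → S)} [IsProbabilityMeasure μbar] (hiid : IsIID ν μbar)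
    (h : μbar {F | kF F = Nat.card S} = 1) : ∀ᵐ f ∂ν, f.Surjective := by
  have hmeas : MeasurableSet ((fun F : ℕ → S → S ↦ F 1) ⁻¹' {g | g.Surjective}) :=
    measurable_pi_apply 1 .of_discrete
  rw [← hiid.map_eval 1]
  refine (ae_map_iff (measurable_pi_apply 1).aemeasurable MeasurableSet.of_discrete).2 ?_
  refine (prob_compl_eq_zero_iff hmeas).2 (le_antisymm prob_le_one (h ▸ measure_mono ?_))
  exact fun F hF ↦ surjective_fwd_of_kF_eq_card hF 1

variable [Fintype S]

lemma Consistent.sum_col_eq_one {P : S → S → ℝ} {ν : Measure (S → S)} [IsProbabilityMeasure ν]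
    (hcons : Consistent P ν) (hP : ∀ i j, 0 ≤ P i j) (hsurj : ∀ᵐ f ∂ν, f.Surjective) (j : S) :
    ∑ i, P i j = 1 := by
  classical
  have hsum : ∑ i, ν {f | f i = j} = 1 := by
    calc ∑ i, ν {f | f i = j} = ∫⁻ f, ∑ i, {f : S → S | f i = j}.indicator 1 f ∂ν := by
          rw [lintegral_finsetSum _ fun i _ ↦ measurable_one.indicator MeasurableSet.of_discrete]
          simp [lintegral_indicator_one MeasurableSet.of_discrete]
      _ = ∫⁻ _, 1 ∂ν := lintegral_congr_ae <| hsurj.mono fun f hf ↦ by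
          simp only [Set.indicator_apply, Set.mem_ofPred_eq, Pi.one_apply]
          rw [hf.bijective_of_finite.sum_comp fun k ↦ if k = j then 1 else 0]
          simp
      _ = 1 := by simp
  rw [← ENNReal.ofReal_eq_one, ENNReal.ofReal_sum_of_nonneg fun i _ ↦ hP i j, ← hsum]
  exact Finset.sum_congr rfl fun i _ ↦ (hcons i j).symm

variable [DecidableEq S]

noncomputable def permMixture (w : Equiv.Perm S → ℝ) : Measure (S → S) :=
  ∑ σ, ENNReal.ofReal (w σ) • Measure.dirac ⇑σ

lemma permMixture_apply (w : Equiv.Perm S → ℝ) (A : Set (S → S)) :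
    permMixture w A = ∑ σ, ENNReal.ofReal (w σ) * A.indicator 1 ⇑σ := by
  simp [permMixture, Measure.dirac_apply]

lemma isProbabilityMeasure_permMixture {w : Equiv.Perm S → ℝ} (hw0 : ∀ σ, 0 ≤ w σ)
    (hw1 : ∑ σ, w σ = 1) : IsProbabilityMeasure (permMixture w) := by
  constructor
  simp [permMixture_apply, ← ENNReal.ofReal_sum_of_nonneg fun σ _ ↦ hw0 σ, hw1]

lemma ae_bijective_permMixture (w : Equiv.Perm S → ℝ) :
    ∀ᵐ f ∂permMixture w, f.Bijective := by
  simp [ae_iff, permMixture_apply]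

lemma consistent_permMixture {P : S → S → ℝ} {w : Equiv.Perm S → ℝ} (hw0 : ∀ σ, 0 ≤ w σ)
    (hwP : ∑ σ, w σ • σ.permMatrix ℝ = Matrix.of P) : Consistent P (permMixture w) := by
  intro i j
  have hPij : P i j = ∑ σ, if σ i = j then w σ else 0 := by
    rw [show P i j = Matrix.of P i j from rfl, ← hwP, Matrix.sum_apply]
    simp [PEquiv.toMatrix_apply, Equiv.toPEquiv_apply]
  rw [permMixture_apply, hPij, ENNReal.ofReal_sum_of_nonneg fun σ _ ↦ by
    split_ifs <;> simp [hw0]]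
  refine Finset.sum_congr rfl fun σ _ ↦ ?_
  by_cases h : σ i = j <;> simp [h]

end Measures

theorem stmt12_general [Fintype S] [DecidableEq S]
    [MeasurableSpace S] [DiscreteMeasurableSpace S]
    (n : ℕ) (hcard : Fintype.card S = n)
    (P : S → S → ℝ) (hP : IsStochastic P) :
    (∃ ν : Measure (S → S), IsProbabilityMeasure ν ∧ Consistent P ν ∧
      ∃ μbar : Measure (ℕ → S → S), IsProbabilityMeasure μbar ∧ IsIID ν μbar ∧
        μbar {F | kF F = n} = 1) ↔ (∀ j, ∑ i, P i j = 1) := by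
  rw [← hcard, ← Nat.card_eq_fintype_card]
  constructor
  · rintro ⟨ν, _, hcons, μbar, _, hiid, hk⟩
    exact hcons.sum_col_eq_one hP.1 (ae_surjective_of_measure_kF_eq_card hiid hk)
  · intro hcol
    obtain ⟨w, hw0, hw1, hwP⟩ := exists_eq_sum_perm_of_mem_doublyStochastic
      (mem_doublyStochastic_iff_sum.2 ⟨hP.1, hP.2, hcol⟩)
    have hν := isProbabilityMeasure_permMixture hw0 hw1
    refine ⟨permMixture w, hν, consistent_permMixture hw0 hwP,
      Measure.infinitePi fun _ ↦ permMixture w, inferInstance, isIID_infinitePi _, ?_⟩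
    have hbij : ∀ᵐ F ∂Measure.infinitePi fun _ ↦ permMixture w, ∀ s, (F s).Bijective :=
      ae_all_iff.2 fun s : ℕ ↦
        (measurePreserving_eval_infinitePi _ s).quasiMeasurePreserving.ae
          (ae_bijective_permMixture w)
    rw [measure_congr (ae_eq_univ.2 (hbij.mono fun F hF ↦ kF_eq_card_of_bijective hF)),
      measure_univ]

theorem stmt12 [Fintype S] [DecidableEq S]
    [MeasurableSpace S] [DiscreteMeasurableSpace S]
    (n : ℕ) (hcard : Fintype.card S = n) (hn : 2 ≤ n)
    (P : S → S → ℝ) (hP : IsStochastic P) (hirr : Irred P) :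
    (∃ ν : Measure (S → S), IsProbabilityMeasure ν ∧ Consistent P ν ∧
      ∃ μbar : Measure (ℕ → S → S), IsProbabilityMeasure μbar ∧ IsIID ν μbar ∧
        μbar {F | kF F = n} = 1) ↔ (∀ j, ∑ i, P i j = 1) :=
  stmt12_general n hcard P hP

end CFTP
end
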